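/- Let T be a finite tree whose vertex of degree-2 set in its skeleton is nonempty, such that T has at most ℓ-1 penultimate vertices. Let m be the minimum over all degree-2 vertices x of the skeleton S(T) of dep(x), where dep(x) is the minimum over components A of S(T)-x of the maximum distance in S(T) from x to a vertex of A. Then m ≤ (ℓ-1)/2. -/

import Mathlib

open Finset

/-- The skeleton of a tree `G`: the subgraph induced on the non-leaf vertices
(vertices of degree at least 2). -/
abbrev skeletonSet {V : Type*} [Fintype V] [DecidableEq V] (G : SimpleGraph V)
    [DecidableRel G.Adj] : Set V := {v : V | 2 ≤ G.degree v}

abbrev skeleton {V : Type*} [Fintype V] [DecidableEq V] (G : SimpleGraph V)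
    [DecidableRel G.Adj] : SimpleGraph (skeletonSet G) := G.induce (skeletonSet G)

/-!
Let `m` be the least depth (largest distance from `x`) of a component of `S - x`, over the
degree-2 vertices `x` of the skeleton `S`. If a vertex `w` at distance `i` from `x` on a geodesic
into a component of `S - x` of depth `n` had degree 2, the component of `S - w` beyond `w` would
have depth at most `n - i`. By minimality of `m`, on a geodesic from `x` to a farthest vertex of
either of the two components of `S - x`, the last `m - 1` interior vertices have degree at least
3. So `S` has at least `2 (m - 1)` such vertices, and since in a tree the leaves outnumber the
vertices of degree at least 3 by at least two, `S` has at least `2 m` leaves.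
-/

namespace SimpleGraph

variable {V : Type*} {G : SimpleGraph V}

lemma Walk.dist_getVert_of_length_eq_dist {u v : V} (p : G.Walk u v)
    (hp : p.length = G.dist u v) {i : ℕ} (hi : i ≤ p.length) : G.dist u (p.getVert i) = i := by
  rw [← length_eq_dist_of_subwalk hp (p.isSubwalk_take i), Walk.take_length]
  exact min_eq_left hi

lemma Walk.IsPath.start_notMem_support_drop {u v : V} {p : G.Walk u v} (hp : p.IsPath)
    {i : ℕ} (h0 : 0 < i) (hi : i ≤ p.length) : u ∉ (p.drop i).support := by
  intro hu
  obtain ⟨j, hj, hjl⟩ := Walk.mem_support_iff_exists_getVert.1 hu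
  rw [Walk.drop_getVert] at hj
  rw [Walk.drop_length] at hjl
  have := (hp.getVert_eq_start_iff (i := i + j) (by omega)).1 hj
  omega

lemma Walk.IsPath.two_le_degree_getVert [Fintype V] [DecidableRel G.Adj] {u v : V}
    {p : G.Walk u v} (hp : p.IsPath) {i : ℕ} (h0 : 0 < i) (hi : i < p.length) :
    2 ≤ G.degree (p.getVert i) := by
  rw [← card_neighborFinset_eq_degree, Nat.succ_le_iff, Finset.one_lt_card]
  refine ⟨p.getVert (i - 1), ?_, p.getVert (i + 1), ?_, fun h => ?_⟩
  · simpa [Nat.sub_add_cancel h0] using (p.adj_getVert_succ (i := i - 1) (by omega)).symm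
  · simpa using p.adj_getVert_succ hi
  · have := hp.getVert_injOn (show i - 1 ≤ p.length by omega)
      (show i + 1 ≤ p.length by omega) h
    omega

lemma exists_walk_of_reachable_induce {s : Set V} {a b : s} (h : (G.induce s).Reachable a b) :
    ∃ p : G.Walk a b, ∀ z ∈ p.support, z ∈ s := by
  obtain ⟨q⟩ := h
  refine ⟨q.map (Embedding.induce s).toHom, fun z hz => ?_⟩
  obtain ⟨z, -, rfl⟩ := List.mem_map.1 (Walk.support_map _ q ▸ hz)
  exact z.2

lemma IsAcyclic.not_reachable_induce_of_mem_support (hG : G.IsAcyclic) {a b w : V}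
    {p : G.Walk a b} (hp : p.IsPath) (hw : w ∈ p.support) (ha : a ≠ w) (hb : b ≠ w) :
    ¬ (G.induce {y | y ≠ w}).Reachable ⟨a, ha⟩ ⟨b, hb⟩ := by
  classical
  intro h
  obtain ⟨q, hq⟩ := exists_walk_of_reachable_induce h
  have hpq : p = q.bypass :=
    congrArg Subtype.val ((hG.subsingleton_path a b).elim ⟨p, hp⟩ q.toPath)
  exact hq w (q.support_bypass_subset_support (hpq ▸ hw)) rfl

lemma Connected.dist_add_dist_le_of_not_reachable_induce (hG : G.Connected) {w : V}
    {a b : {y // y ≠ w}} (h : ¬ (G.induce {y | y ≠ w}).Reachable a b) :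
    G.dist a w + G.dist w b ≤ G.dist a b := by
  classical
  obtain ⟨r, hr⟩ := hG.exists_walk_length_eq_dist a b
  have hw : w ∈ r.support := by
    by_contra hw
    exact h (r.induce {y | y ≠ w} fun z hz hzw => hw (hzw ▸ hz)).reachable
  have hsplit := congrArg Walk.length (r.take_spec hw)
  rw [Walk.length_append] at hsplit
  have := dist_le (r.takeUntil w hw)
  have := dist_le (r.dropUntil w hw)
  omega

/-- The paper's `dep(x) ≤ n` says that `G.BranchWithin x c n` holds for some `c`. -/
def BranchWithin (G : SimpleGraph V) (x : V) (c : (G.induce {y | y ≠ x}).ConnectedComponent)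
    (n : ℕ) : Prop :=
  ∀ u ∈ c.supp, G.dist x u ≤ n

lemma ConnectedComponent.exists_mem_supp_branchWithin_dist [Finite V] {x : V}
    (c : (G.induce {y | y ≠ x}).ConnectedComponent) :
    ∃ u ∈ c.supp, G.BranchWithin x c (G.dist x u) := by
  obtain ⟨v, hv⟩ := c.exists_rep
  obtain ⟨u, hu, hmax⟩ := Set.exists_max_image c.supp (fun u => G.dist x u) (Set.toFinite _)
    ⟨v, hv⟩
  exact ⟨u, hu, hmax⟩

/-- The witness is the component of `G - w` containing `u`, where `w = p.getVert i`: it is the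
part of `c` beyond `w`, and every geodesic from `x` into it passes through `w`. -/
lemma BranchWithin.exists_getVert (hG : G.IsTree) {x : V}
    {c : (G.induce {y | y ≠ x}).ConnectedComponent} {n : ℕ} (hc : G.BranchWithin x c n)
    {u : {y // y ≠ x}} (hu : u ∈ c.supp) {p : G.Walk x u} (hp : p.length = G.dist x u) {i : ℕ}
    (h0 : 0 < i) (hi : i < p.length) : ∃ c', G.BranchWithin (p.getVert i) c' (n - i) := by
  classical
  set w := p.getVert i
  have hpath := p.isPath_of_length_eq_dist hp
  have hxw : x ≠ w := fun h => by
    have := (hpath.getVert_eq_start_iff hi.le).1 h.symm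
    omega
  have huw : u.1 ≠ w := fun h => by
    have := (hpath.getVert_eq_end_iff hi.le).1 h.symm
    omega
  have hsep := hG.isAcyclic.not_reachable_induce_of_mem_support hpath (p.getVert_mem_support i)
    hxw huw
  refine ⟨(G.induce {y | y ≠ w}).connectedComponentMk ⟨u, huw⟩, fun v hv => ?_⟩
  have hvu : (G.induce {y | y ≠ w}).Reachable v ⟨u, huw⟩ := ConnectedComponent.exact hv
  obtain ⟨r, hr⟩ := exists_walk_of_reachable_induce hvu
  have hxr : x ∉ r.support := fun hx => hsep ((r.dropUntil x hx).induce _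
    fun z hz => hr z (r.support_dropUntil_subset_support hx hz)).reachable
  have hvx : v.1 ≠ x := fun h => hxr (by simpa [h] using r.start_mem_support)
  have hvc : (G.induce {y | y ≠ x}).connectedComponentMk ⟨v, hvx⟩ = c :=
    (ConnectedComponent.sound (r.induce _ fun z hz =>
      show z ≠ x from fun hzx => hxr (hzx ▸ hz)).reachable).trans hu
  have hxv : ¬ (G.induce {y | y ≠ w}).Reachable ⟨x, hxw⟩ v := fun h => hsep (h.trans hvu)
  have hsplit := hG.connected.dist_add_dist_le_of_not_reachable_induce hxv
  have hdist := hc _ hvc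
  rw [p.dist_getVert_of_length_eq_dist hp hi.le] at hsplit
  dsimp only at hsplit hdist
  omega

section Finite

variable [Fintype V] [DecidableRel G.Adj]

lemma IsTree.three_le_degree_getVert (hG : G.IsTree) {m : ℕ}
    (hmin : ∀ x, G.degree x = 2 → ∀ c n, G.BranchWithin x c n → m ≤ n)
    {x : V} {c : (G.induce {y | y ≠ x}).ConnectedComponent} {n : ℕ} (hc : G.BranchWithin x c n)
    {u : {y // y ≠ x}} (hu : u ∈ c.supp) {p : G.Walk x u} (hp : p.length = G.dist x u) {i : ℕ}
    (hni : n - m < i) (hi : i < p.length) : 3 ≤ G.degree (p.getVert i) := by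
  have h2 := (p.isPath_of_length_eq_dist hp).two_le_degree_getVert (by omega) hi
  have hun : G.dist x u ≤ n := hc u hu
  by_contra h3
  obtain ⟨c', hc'⟩ := hc.exists_getVert hG hu hp (by omega) hi
  have := hmin _ (by omega) c' _ hc'
  omega

lemma IsTree.exists_finset_three_le_degree (hG : G.IsTree) {m : ℕ}
    (hmin : ∀ x, G.degree x = 2 → ∀ c n, G.BranchWithin x c n → m ≤ n)
    {x : V} (hx : G.degree x = 2) (c : (G.induce {y | y ≠ x}).ConnectedComponent) :
    ∃ F : Finset V, #F = m - 1 ∧ ∀ z ∈ F, 3 ≤ G.degree z ∧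
      ∃ hz : z ≠ x, (G.induce {y | y ≠ x}).connectedComponentMk ⟨z, hz⟩ = c := by
  classical
  obtain ⟨u, hu, hfar⟩ := c.exists_mem_supp_branchWithin_dist
  have hm := hmin x hx c _ hfar
  obtain ⟨p, hp⟩ := hG.connected.exists_walk_length_eq_dist x u
  have hpath := p.isPath_of_length_eq_dist hp
  refine ⟨(Ioo (G.dist x u - m) (G.dist x u)).image p.getVert, ?_, fun z hz => ?_⟩
  · rw [card_image_of_injOn, Nat.card_Ioo]
    · omega
    · exact hpath.getVert_injOn.mono fun i hi => (mem_Ioo.1 hi).2.le.trans hp.ge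
  · obtain ⟨i, hi, rfl⟩ := mem_image.1 hz
    rw [mem_Ioo] at hi
    have hix : p.getVert i ≠ x := fun h => by
      have := (hpath.getVert_eq_start_iff (by omega)).1 h
      omega
    refine ⟨hG.three_le_degree_getVert hmin hfar hu hp (by omega) (by omega), hix, ?_⟩
    exact (ConnectedComponent.sound ((p.drop i).induce _ fun z hz => show z ≠ x from fun hzx =>
      hpath.start_notMem_support_drop (by omega) (by omega) (hzx ▸ hz)).reachable).trans hu

lemma IsTree.card_three_le_degree_add_two_le [Nontrivial V] (hG : G.IsTree) :
    #{v | 3 ≤ G.degree v} + 2 ≤ #{v | G.degree v = 1} := by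
  classical
  have hsum := Finset.sum_le_sum (s := univ) fun v _ =>
    show 2 + (if 3 ≤ G.degree v then 1 else 0) ≤
        G.degree v + (if G.degree v = 1 then 1 else 0) by
      have := hG.connected.preconnected.degree_pos_of_nontrivial v
      split_ifs <;> omega
  rw [sum_add_distrib, sum_add_distrib, ← card_filter, ← card_filter,
    sum_degrees_eq_twice_card_edges, sum_const, card_univ, smul_eq_mul] at hsum
  have := hG.card_edgeFinset
  omega

theorem IsTree.two_mul_le_card_degree_eq_one (hG : G.IsTree) {m : ℕ}
    (hmin : ∀ x, G.degree x = 2 → ∀ c n, G.BranchWithin x c n → m ≤ n)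
    {x : V} (hx : G.degree x = 2) : 2 * m ≤ #{v | G.degree v = 1} := by
  classical
  obtain ⟨y₁, y₂, hne, hN⟩ := card_eq_two.1 hx
  have h₁ : G.Adj x y₁ := (mem_neighborFinset ..).1 (by simp [hN])
  have h₂ : G.Adj x y₂ := (mem_neighborFinset ..).1 (by simp [hN])
  have : Nontrivial V := ⟨⟨y₁, y₂, hne⟩⟩
  have hsep := hG.isAcyclic.not_reachable_induce_of_mem_support
    (p := .cons h₁.symm (.cons h₂ .nil)) (by simp [h₁.ne', h₂.ne, hne]) (by simp)
    h₁.ne' h₂.ne'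
  obtain ⟨F₁, hF₁, hdeg₁⟩ := hG.exists_finset_three_le_degree hmin hx
    ((G.induce {y | y ≠ x}).connectedComponentMk ⟨y₁, h₁.ne'⟩)
  obtain ⟨F₂, hF₂, hdeg₂⟩ := hG.exists_finset_three_le_degree hmin hx
    ((G.induce {y | y ≠ x}).connectedComponentMk ⟨y₂, h₂.ne'⟩)
  have hdisj : Disjoint F₁ F₂ := Finset.disjoint_left.2 fun z hz₁ hz₂ => by
    obtain ⟨-, _, hc₁⟩ := hdeg₁ z hz₁
    obtain ⟨-, _, hc₂⟩ := hdeg₂ z hz₂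
    exact hsep (ConnectedComponent.exact (hc₁.symm.trans hc₂))
  have hsub : F₁ ∪ F₂ ⊆ ({v | 3 ≤ G.degree v} : Finset V) := fun z hz => by
    rcases mem_union.1 hz with hz | hz
    · simpa using (hdeg₁ z hz).1
    · simpa using (hdeg₂ z hz).1
  have := card_le_card hsub
  rw [card_union_of_disjoint hdisj] at this
  have := hG.card_three_le_degree_add_two_le
  omega

theorem IsTree.exists_branchWithin_two_mul_le (hG : G.IsTree) (h : ∃ x, G.degree x = 2) :
    ∃ x, G.degree x = 2 ∧
      ∃ c n, G.BranchWithin x c n ∧ 2 * n ≤ #{v | G.degree v = 1} := by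
  classical
  obtain ⟨x₀, hx₀⟩ := h
  obtain ⟨y₀, hy₀⟩ := (degree_pos_iff_exists_adj G x₀).1 (by omega)
  have hex : ∃ n, ∃ x, G.degree x = 2 ∧ ∃ c, G.BranchWithin x c n := by
    obtain ⟨u, -, hu⟩ := ((G.induce {y | y ≠ x₀}).connectedComponentMk
      ⟨y₀, hy₀.ne'⟩).exists_mem_supp_branchWithin_dist
    exact ⟨_, x₀, hx₀, _, hu⟩
  obtain ⟨x, hx, c, hc⟩ := Nat.find_spec hex
  exact ⟨x, hx, c, _, hc, hG.two_mul_le_card_degree_eq_one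
    (fun x' hx' c' n hn => Nat.find_min' hex ⟨x', hx', c', hn⟩) hx⟩

end Finite

end SimpleGraph

lemma isTree_skeleton {V : Type*} [Fintype V] [DecidableEq V] {G : SimpleGraph V}
    [DecidableRel G.Adj] (hG : G.IsTree) [Nonempty (skeletonSet G)] : (skeleton G).IsTree := by
  refine ⟨⟨hG.connected.preconnected.induce_of_degree_eq_one fun v hv a ha b hb => ?_⟩,
    hG.isAcyclic.induce _⟩
  by_contra hab
  exact hv (one_lt_card.2
    ⟨a, (G.mem_neighborFinset ..).2 ha, b, (G.mem_neighborFinset ..).2 hb, hab⟩)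

theorem stmt_8_general {V : Type*} [Fintype V] [DecidableEq V] (G : SimpleGraph V)
    [DecidableRel G.Adj] (hT : G.IsTree) (ℓ : ℕ)
    (hdeg2 : ∃ x : skeletonSet G, (skeleton G).degree x = 2)
    (hpen : {x : skeletonSet G | (skeleton G).degree x = 1}.ncard ≤ ℓ - 1) :
    ∃ x : skeletonSet G, (skeleton G).degree x = 2 ∧
      ∃ c : ((skeleton G).induce {y : skeletonSet G | y ≠ x}).ConnectedComponent,
        ∀ u : {y : skeletonSet G // y ≠ x},
          ((skeleton G).induce {y : skeletonSet G | y ≠ x}).connectedComponentMk u = c →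
            2 * (skeleton G).dist x u.1 ≤ ℓ - 1 := by
  have : Nonempty (skeletonSet G) := hdeg2.nonempty
  obtain ⟨x, hx, c, n, hc, hn⟩ := (isTree_skeleton hT).exists_branchWithin_two_mul_le hdeg2
  have hleaves : #{v | (skeleton G).degree v = 1} =
      {v : skeletonSet G | (skeleton G).degree v = 1}.ncard := by
    rw [Set.ncard_eq_toFinset_card', Set.toFinset_ofPred]
  exact ⟨x, hx, c, fun u hu => by have := hc u hu; omega⟩

/-- part of Lemma 10: Let `T` be a tree whose skeleton `S(T)` has at least
one vertex of degree 2, and with at most `ℓ - 1` penultimate vertices (leaves of `S(T)`).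
Then `m ≤ (ℓ-1)/2`, where `m` is the minimum over degree-2 vertices `x` of `S(T)` of
`dep(x)`, the minimum over components `A` of `S(T) - x` of the maximal distance in `S(T)`
from `x` to a vertex of `A`.  Equivalently: there are a degree-2 vertex `x` of `S(T)` and a
component of `S(T) - x` all of whose vertices are at distance at most `(ℓ-1)/2` from `x`
in `S(T)`. -/
theorem stmt_8 {V : Type*} [Fintype V] [DecidableEq V] (G : SimpleGraph V)
    [DecidableRel G.Adj] (hT : G.IsTree) (ℓ : ℕ) (hℓ : 1 ≤ ℓ)
    (hdeg2 : ∃ x : skeletonSet G, (skeleton G).degree x = 2)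
    (hpen : {x : skeletonSet G | (skeleton G).degree x = 1}.ncard ≤ ℓ - 1) :
    ∃ x : skeletonSet G, (skeleton G).degree x = 2 ∧
      ∃ c : ((skeleton G).induce {y : skeletonSet G | y ≠ x}).ConnectedComponent,
        ∀ u : {y : skeletonSet G // y ≠ x},
          ((skeleton G).induce {y : skeletonSet G | y ≠ x}).connectedComponentMk u = c →
            2 * (skeleton G).dist x u.1 ≤ ℓ - 1 :=
  stmt_8_general G hT ℓ hdeg2 hpen
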